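/- arXiv:2407.04380 — 3 statements merged into one kernel-verified Lean document; each statement's English description precedes it below -/
import Mathlib

section
/- Let 𝒪 be the ring of integers of an imaginary quadratic field K, with unit group 𝒪^×, and fix s ≥ 0, δ > 0, z ∈ ℂ. Let N(z) be the number of pairs (p,q) ∈ 𝒪² with p𝒪 + q𝒪 = 𝒪 such that a(-s)h(z)ᵀ(p,q) ∈ 𝔠(D̄(0,δ)). Then N(z) ≠ |𝒪^×| if and only if there exists (p,q) ∈ 𝒪² with p𝒪 + q𝒪 = 𝒪, p ≠ 0, and e^s/δ ≤ |z - q/p| ≤ e^{s/2}/|p|. -/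
open Pointwise

/-- `ω` is the standard generator of the ring of integers of an imaginary quadratic field:
`ω = i√|D|/2` if the (fundamental) discriminant `D ≡ 0 mod 4`, and `ω = (1+i√|D|)/2` if
`D ≡ 1 mod 4`. -/
def IsImagQuadOmega (ω : ℂ) : Prop :=
  ∃ D : ℤ, D < 0 ∧
    ((Squarefree (D / 4) ∧ (D / 4) % 4 ≠ 1 ∧ D % 4 = 0 ∧
        ω = Complex.I * Real.sqrt |(D : ℝ)| / 2) ∨
      (Squarefree D ∧ D % 4 = 1 ∧
        ω = (1 + Complex.I * Real.sqrt |(D : ℝ)|) / 2))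

/-- `O ⊆ ℂ` is (the image of) the ring of integers `ℤ[ω]` of an imaginary quadratic field. -/
def IsImagQuadRing (O : Subring ℂ) : Prop :=
  ∃ ω : ℂ, IsImagQuadOmega ω ∧ (O : Set ℂ) = {z | ∃ a b : ℤ, z = a + b * ω}

/-- `p` and `q` are coprime in `O`, i.e. `pO + qO = O`. -/
def CoprimeIn (O : Subring ℂ) (p q : ℂ) : Prop :=
  ∃ a ∈ O, ∃ b ∈ O, a * p + b * q = 1

/-- The matrix `h(z) = [[1, z], [0, 1]]`. -/
noncomputable def hMat (z : ℂ) : Matrix (Fin 2) (Fin 2) ℂ := !![1, z; 0, 1]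

/-- The matrix `a(t) = diag(e^{-t/2}, e^{t/2})`. -/
noncomputable def aMat (t : ℝ) : Matrix (Fin 2) (Fin 2) ℂ :=
  !![Complex.exp (-(t : ℂ) / 2), 0; 0, Complex.exp ((t : ℂ) / 2)]

/-- The cone of a subset `A ⊆ ℂ`. -/
def cone (A : Set ℂ) : Set (Fin 2 → ℂ) :=
  {v | v 1 ∈ Metric.closedBall (0 : ℂ) 1 \ {0} ∧ v 0 ∈ v 1 • A}

/-!
The cone condition on `a(-s) h(z)ᵀ (p, q)` unwinds to `zp + q ≠ 0`, `‖zp + q‖ ≤ e^{s/2}` and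
`e^s ‖p‖ ≤ δ ‖zp + q‖`. For `p = 0` it holds exactly when `q` is a unit: `O` is a lattice, so a
nonzero element of norm `< 1` would have infinitely many distinct powers in the unit disc, hence
units have norm one. For `p ≠ 0`, dividing by `p` turns it into `e^s/δ ≤ ‖z + q/p‖ ≤ e^{s/2}/‖p‖`.
Since `O` is a lattice there are finitely many solutions, so their number differs from `|O^×|`
exactly when one of them has `p ≠ 0`.
-/

lemma IsImagQuadOmega.im_pos {ω : ℂ} (hω : IsImagQuadOmega ω) : 0 < ω.im := by
  obtain ⟨D, hD, ⟨-, -, -, rfl⟩ | ⟨-, -, rfl⟩⟩ := hω <;>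
    simpa [Complex.div_im] using abs_pos.mpr (show (D : ℝ) ≠ 0 by exact_mod_cast hD.ne)

lemma finite_setOf_norm_intCast_mul_add_intCast_le (τ : UpperHalfPlane) (R : ℝ) :
    {v : Fin 2 → ℤ | ‖(v 0 : ℂ) * τ + v 1‖ ≤ R}.Finite := by
  refine (isCompact_closedBall (0 : Fin 2 → ℤ) (R / EisensteinSeries.r τ)).finite_of_discrete.subset
    fun v hv => ?_
  rw [mem_closedBall_zero_iff, le_div_iff₀ (EisensteinSeries.r_pos τ), mul_comm]
  rcases eq_or_ne v 0 with rfl | hv0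
  · simpa using hv
  · exact (EisensteinSeries.r_mul_max_le τ hv0).trans hv

lemma IsImagQuadRing.finite_setOf_norm_le {O : Subring ℂ} (hO : IsImagQuadRing O) (R : ℝ) :
    {x : ℂ | x ∈ O ∧ ‖x‖ ≤ R}.Finite := by
  obtain ⟨ω, hω, hOω⟩ := hO
  let τ : UpperHalfPlane := ⟨ω, hω.im_pos⟩
  refine ((finite_setOf_norm_intCast_mul_add_intCast_le τ R).image
    fun v => (v 0 : ℂ) * τ + v 1).subset ?_
  rintro x ⟨hx, hxR⟩
  obtain ⟨a, b, rfl⟩ : ∃ a b : ℤ, x = a + b * ω := (Set.ext_iff.mp hOω x).mp hx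
  exact ⟨![b, a], by simpa [τ, add_comm] using hxR, by simp [τ, add_comm]⟩

section DiscreteSubring

variable {O : Subring ℂ}

lemma one_le_norm_of_mem (hO : {x : ℂ | x ∈ O ∧ ‖x‖ ≤ 1}.Finite) {x : ℂ} (hx : x ∈ O)
    (hx0 : x ≠ 0) : 1 ≤ ‖x‖ := by
  by_contra! hlt
  have hinj : Function.Injective (x ^ · : ℕ → ℂ) := fun m n hmn =>
    (pow_right_strictAnti₀ (norm_pos_iff.mpr hx0) hlt).injective <| by
      simpa only [norm_pow] using congrArg norm hmn
  have hmem (n : ℕ) : x ^ n ∈ {x : ℂ | x ∈ O ∧ ‖x‖ ≤ 1} :=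
    ⟨O.pow_mem hx n, by simpa only [norm_pow] using pow_le_one₀ (norm_nonneg x) hlt.le⟩
  exact Set.infinite_of_injective_forall_mem hinj hmem hO

lemma norm_eq_one_of_mul_eq_one (hO : {x : ℂ | x ∈ O ∧ ‖x‖ ≤ 1}.Finite) {u v : ℂ} (hu : u ∈ O)
    (hv : v ∈ O) (huv : u * v = 1) : ‖u‖ = 1 := by
  have h1 := one_le_norm_of_mem hO hu (left_ne_zero_of_mul_eq_one huv)
  have h2 := one_le_norm_of_mem hO hv (right_ne_zero_of_mul_eq_one huv)
  have : ‖u‖ * ‖v‖ = 1 := by rw [← norm_mul, huv, norm_one]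
  nlinarith

end DiscreteSubring

lemma mulVec_aMat_neg_mul_hMat_transpose (s : ℝ) (z p q : ℂ) :
    (aMat (-s) * (hMat z).transpose).mulVec ![p, q] =
      ![Complex.exp (s / 2) * p, Complex.exp (-s / 2) * (z * p + q)] := by
  ext i
  fin_cases i <;> simp [aMat, hMat, Matrix.mulVec, Matrix.mul_apply, dotProduct, Fin.sum_univ_two]
  ring

lemma cons_mem_cone_closedBall_iff (δ : ℝ) (x y : ℂ) :
    ![x, y] ∈ cone (Metric.closedBall 0 δ) ↔ y ≠ 0 ∧ ‖y‖ ≤ 1 ∧ ‖x‖ ≤ δ * ‖y‖ := by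
  have hsmul {y : ℂ} (hy : y ≠ 0) : x ∈ y • Metric.closedBall (0 : ℂ) δ ↔ ‖x‖ ≤ δ * ‖y‖ := by
    rw [Set.mem_smul_set_iff_inv_smul_mem₀ hy, Metric.mem_closedBall, dist_zero_right,
      smul_eq_mul, norm_mul, norm_inv, inv_mul_le_iff₀ (norm_pos_iff.mpr hy), mul_comm]
  simp only [cone, Set.mem_ofPred_eq, Matrix.cons_val_one, Matrix.cons_val_zero, Set.mem_sdiff,
    Metric.mem_closedBall, dist_zero_right, Set.mem_singleton_iff]
  exact ⟨fun ⟨⟨h1, h0⟩, hx⟩ => ⟨h0, h1, (hsmul h0).mp hx⟩,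
    fun ⟨h0, h1, hx⟩ => ⟨⟨h1, h0⟩, (hsmul h0).mpr hx⟩⟩

lemma mulVec_mem_cone_iff (s δ : ℝ) (z p q : ℂ) :
    (aMat (-s) * (hMat z).transpose).mulVec ![p, q] ∈ cone (Metric.closedBall 0 δ) ↔
      z * p + q ≠ 0 ∧ ‖z * p + q‖ ≤ Real.exp (s / 2) ∧
        Real.exp s * ‖p‖ ≤ δ * ‖z * p + q‖ := by
  have hexp (t : ℝ) : ‖Complex.exp (t / 2)‖ = Real.exp (t / 2) := by
    rw [Complex.norm_exp]; norm_cast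
  have hE : 0 < Real.exp (s / 2) := Real.exp_pos _
  have hEs : Real.exp s = Real.exp (s / 2) * Real.exp (s / 2) := by rw [← Real.exp_add]; ring_nf
  rw [mulVec_aMat_neg_mul_hMat_transpose, cons_mem_cone_closedBall_iff, norm_mul, norm_mul,
    ← Complex.ofReal_neg, hexp, hexp, neg_div, Real.exp_neg]
  refine and_congr (by simp [Complex.exp_ne_zero]) (and_congr ?_ ?_)
  · rw [inv_mul_le_iff₀ hE, mul_one]
  · rw [hEs, ← mul_le_mul_iff_of_pos_left hE]
    field_simp

section Coprime

variable {O : Subring ℂ} {p q : ℂ}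

lemma coprimeIn_neg_right_iff : CoprimeIn O p (-q) ↔ CoprimeIn O p q := by
  refine ⟨fun ⟨a, ha, b, hb, h⟩ => ⟨a, ha, -b, O.neg_mem hb, ?_⟩,
    fun ⟨a, ha, b, hb, h⟩ => ⟨a, ha, -b, O.neg_mem hb, ?_⟩⟩ <;> rw [← h] <;> ring

lemma coprimeIn_zero_left_iff : CoprimeIn O 0 q ↔ ∃ v ∈ O, q * v = 1 := by
  simp only [CoprimeIn, mul_zero, zero_add, mul_comm _ q]
  exact ⟨fun ⟨_, _, h⟩ => h, fun h => ⟨0, O.zero_mem, h⟩⟩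

end Coprime

def coneSolutions (O : Subring ℂ) (s δ : ℝ) (z : ℂ) : Set (ℂ × ℂ) :=
  {pq | pq.1 ∈ O ∧ pq.2 ∈ O ∧ CoprimeIn O pq.1 pq.2 ∧
    (aMat (-s) * (hMat z).transpose).mulVec ![pq.1, pq.2] ∈ cone (Metric.closedBall 0 δ)}

section ConeSolutions

variable {O : Subring ℂ} {s δ : ℝ} {z : ℂ}

lemma finite_coneSolutions (hO : ∀ R : ℝ, {x : ℂ | x ∈ O ∧ ‖x‖ ≤ R}.Finite) (hδ : 0 ≤ δ) :
    (coneSolutions O s δ z).Finite := by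
  set Rp := δ * Real.exp (s / 2) / Real.exp s
  refine ((hO Rp).prod (hO (Real.exp (s / 2) + ‖z‖ * Rp))).subset ?_
  rintro ⟨p, q⟩ ⟨hp, hq, -, hcone⟩
  obtain ⟨-, hw, hpw⟩ := (mulVec_mem_cone_iff s δ z p q).mp hcone
  have hpR : ‖p‖ ≤ Rp := by
    rw [le_div_iff₀ (Real.exp_pos s), mul_comm]
    exact hpw.trans (mul_le_mul_of_nonneg_left hw hδ)
  have hqR : ‖q‖ ≤ Real.exp (s / 2) + ‖z‖ * Rp := calc
    ‖q‖ = ‖(z * p + q) - z * p‖ := by rw [add_sub_cancel_left]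
    _ ≤ ‖z * p + q‖ + ‖z‖ * ‖p‖ := (norm_sub_le _ _).trans_eq (by rw [norm_mul])
    _ ≤ _ := by gcongr
  exact ⟨⟨hp, hpR⟩, hq, hqR⟩

lemma mk_zero_mem_coneSolutions_iff (hO : {x : ℂ | x ∈ O ∧ ‖x‖ ≤ 1}.Finite) (hs : 0 ≤ s)
    (hδ : 0 ≤ δ) {q : ℂ} : (0, q) ∈ coneSolutions O s δ z ↔ q ∈ O ∧ ∃ v ∈ O, q * v = 1 := by
  simp only [coneSolutions, Set.mem_ofPred_eq, coprimeIn_zero_left_iff, mulVec_mem_cone_iff,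
    mul_zero, zero_add, norm_zero]
  refine ⟨fun ⟨_, hq, hunit, _⟩ => ⟨hq, hunit⟩, fun ⟨hq, v, hv, hqv⟩ => ?_⟩
  have hq1 : ‖q‖ = 1 := norm_eq_one_of_mul_eq_one hO hq hv hqv
  refine ⟨O.zero_mem, hq, ⟨v, hv, hqv⟩, left_ne_zero_of_mul_eq_one hqv, ?_, by positivity⟩
  rw [hq1]
  exact Real.one_le_exp (by positivity)

lemma mk_neg_mem_coneSolutions_iff (hδ : 0 < δ) {p q : ℂ} (hp : p ≠ 0) :
    (p, -q) ∈ coneSolutions O s δ z ↔ p ∈ O ∧ q ∈ O ∧ CoprimeIn O p q ∧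
      Real.exp s / δ ≤ ‖z - q / p‖ ∧ ‖z - q / p‖ ≤ Real.exp (s / 2) / ‖p‖ := by
  have hpn : 0 < ‖p‖ := norm_pos_iff.mpr hp
  have hfactor : z * p + -q = (z - q / p) * p := by field_simp; ring
  simp only [coneSolutions, Set.mem_ofPred_eq, neg_mem_iff, coprimeIn_neg_right_iff,
    mulVec_mem_cone_iff, hfactor, norm_mul]
  refine and_congr_right' (and_congr_right' (and_congr_right' ?_))
  rw [div_le_iff₀ hδ, le_div_iff₀ hpn, mul_comm δ, mul_right_comm]
  refine ⟨fun ⟨_, hw, hpw⟩ => ⟨le_of_mul_le_mul_right hpw hpn, hw⟩, fun ⟨hpw, hw⟩ => ⟨?_, hw, ?_⟩⟩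
  · refine mul_ne_zero (fun h0 => ?_) hp
    rw [h0, norm_zero, zero_mul] at hpw
    exact (Real.exp_pos s).not_ge hpw
  · exact mul_le_mul_of_nonneg_right hpw hpn.le

end ConeSolutions

lemma Set.ncard_ne_ncard_sep_iff {α : Type*} {S : Set α} (hS : S.Finite) (P : α → Prop) :
    S.ncard ≠ {x ∈ S | P x}.ncard ↔ ∃ x ∈ S, ¬P x := by
  have hsep : {x ∈ S | P x}.ncard = S.ncard ↔ {x ∈ S | P x} = S :=
    ⟨fun h => Set.eq_of_subset_of_ncard_le (Set.sep_subset S P) h.ge hS, congrArg Set.ncard⟩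
  rw [ne_comm, Ne, hsep, Set.sep_eq_self_iff_mem_true]
  simp only [not_forall, exists_prop]

/-- The number `N(z)` of coprime pairs `(p,q) ∈ O²` with `a(-s) h(z)ᵀ (p,q) ∈ 𝔠(D̄(0,δ))`
differs from `|O^×|` iff there is a coprime pair `(p,q)` with `p ≠ 0` and
`e^s/δ ≤ |z - q/p| ≤ e^{s/2}/|p|`. -/
theorem stmt_5 (O : Subring ℂ) (hO : IsImagQuadRing O) (s δ : ℝ) (hs : 0 ≤ s) (hδ : 0 < δ)
    (z : ℂ) :
    (Set.ncard {pq : ℂ × ℂ | pq.1 ∈ O ∧ pq.2 ∈ O ∧ CoprimeIn O pq.1 pq.2 ∧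
          (aMat (-s) * (hMat z).transpose).mulVec ![pq.1, pq.2] ∈
            cone (Metric.closedBall (0 : ℂ) δ)} ≠
        Set.ncard {u : ℂ | u ∈ O ∧ ∃ v ∈ O, u * v = 1}) ↔
      ∃ p q : ℂ, p ∈ O ∧ q ∈ O ∧ CoprimeIn O p q ∧ p ≠ 0 ∧
        Real.exp s / δ ≤ ‖z - q / p‖ ∧
        ‖z - q / p‖ ≤ Real.exp (s / 2) / ‖p‖ := by
  have hfin := hO.finite_setOf_norm_le
  set U := {u : ℂ | u ∈ O ∧ ∃ v ∈ O, u * v = 1}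
  have htrivial : Prod.mk 0 '' U = {pq ∈ coneSolutions O s δ z | pq.1 = 0} := by
    ext ⟨p, q⟩
    simp only [Set.mem_image, Prod.mk.injEq, Set.mem_sep_iff]
    constructor
    · rintro ⟨u, hu, rfl, rfl⟩
      exact ⟨(mk_zero_mem_coneSolutions_iff (hfin 1) hs hδ.le).mpr hu, rfl⟩
    · rintro ⟨h, rfl⟩
      exact ⟨q, (mk_zero_mem_coneSolutions_iff (hfin 1) hs hδ.le).mp h, rfl, rfl⟩
  change (coneSolutions O s δ z).ncard ≠ U.ncard ↔ _
  rw [← Set.ncard_image_of_injective U (Prod.mk_right_injective (0 : ℂ)), htrivial,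
    Set.ncard_ne_ncard_sep_iff (finite_coneSolutions hfin hδ.le)]
  constructor
  · rintro ⟨⟨p, q⟩, hpq, hp⟩
    rw [← neg_neg q, mk_neg_mem_coneSolutions_iff hδ hp] at hpq
    obtain ⟨hpO, hqO, hcop, h1, h2⟩ := hpq
    exact ⟨p, -q, hpO, hqO, hcop, hp, h1, h2⟩
  · rintro ⟨p, q, hpO, hqO, hcop, hp, h1, h2⟩
    exact ⟨(p, -q), (mk_neg_mem_coneSolutions_iff hδ hp).mpr ⟨hpO, hqO, hcop, h1, h2⟩, hp⟩
end

section
/- Let 𝒪 be the ring of integers of an imaginary quadratic field K, written 𝒪 = ℤ[ω] with ω = i√|D|/2 or (1+i√|D|)/2. Define c = min{|z| : z ∈ 𝒪, |z| > 1}. If s ≥ 2 ln(|1+ω|·c/(c-1)), then for every (p,q) ∈ 𝒪² with p ≠ 0 and every δ > 0, the annulus A(q/p, e^s/δ, e^{s/2}/|p|) is contained in the union of translates A(q', e^s/δ, e^{s/2}) + 𝒪 over q' ∈ 𝒪; that is, the projection of A(q/p, e^s/δ, e^{s/2}/|p|) to ℂ/𝒪 is contained in the projection of A(0, e^s/δ,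 e^{s/2}). -/
open Complex ComplexConjugate

/-- The point of `S` near a point at distance `r + ρ` from `w` will do. -/
lemma exists_mem_norm_sub_mem_Icc {E : Type*} [NormedAddCommGroup E] [NormedSpace ℝ E]
    [Nontrivial E] {S : Set E} {ρ : ℝ} (hS : ∀ z, ∃ q ∈ S, ‖z - q‖ ≤ ρ) (w : E) {r : ℝ}
    (hr : 0 ≤ r) : ∃ q ∈ S, ‖w - q‖ ∈ Set.Icc r (r + 2 * ρ) := by
  have hρ : 0 ≤ ρ := by
    obtain ⟨q, -, hq⟩ := hS w
    exact (norm_nonneg _).trans hq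
  obtain ⟨x, hx⟩ := exists_norm_eq E (add_nonneg hr hρ)
  obtain ⟨q, hqS, hq⟩ := hS (w + x)
  refine ⟨q, hqS, ?_, ?_⟩
  · have : ‖x‖ ≤ ‖w + x - q‖ + ‖w - q‖ := by
      simpa using norm_sub_le (w + x - q) (w - q)
    linarith
  · have : ‖w - q‖ ≤ ‖w + x - q‖ + ‖x‖ := by
      simpa [add_sub_right_comm] using norm_sub_le (w + x - q) x
    linarith

lemma exp_half_div_add_le {A c s : ℝ} (hA : 0 < A) (hc : 1 < c)
    (hs : 2 * Real.log (A * c / (c - 1)) ≤ s) :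
    Real.exp (s / 2) / c + A ≤ Real.exp (s / 2) := by
  have hAc : A * c / (c - 1) ≤ Real.exp (s / 2) :=
    (Real.log_le_iff_le_exp (by apply div_pos <;> nlinarith)).1 (by linarith)
  rw [div_le_iff₀ (by linarith)] at hAc
  rw [div_add' _ _ _ (by linarith), div_le_iff₀ (by linarith)]
  linarith

lemma exists_int_norm_sub_le {ω : ℂ} (hre : 0 ≤ ω.re) (him : ω.im ≠ 0) (z : ℂ) :
    ∃ a b : ℤ, ‖z - (a + b * ω)‖ ≤ ‖1 + ω‖ / 2 := by
  set y := z.im / ω.im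
  set x := z.re - y * ω.re
  refine ⟨round x, round y, ?_⟩
  have hz : z - (round x + round y * ω) = ((x - round x : ℝ) : ℂ) + (y - round y : ℝ) * ω := by
    apply Complex.ext
    · simp [x, y]
      ring
    · simp [y]
      field_simp
  rw [hz]
  obtain ⟨hu₁, hu₂⟩ := abs_le.1 (abs_sub_round x)
  obtain ⟨hv₁, hv₂⟩ := abs_le.1 (abs_sub_round y)
  generalize x - round x = u at hu₁ hu₂ ⊢
  generalize y - round y = v at hv₁ hv₂ ⊢
  rw [← sq_le_sq₀ (norm_nonneg _) (by positivity), div_pow, Complex.sq_norm, Complex.sq_norm,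
    normSq_apply, normSq_apply]
  simp only [add_re, add_im, ofReal_re, ofReal_im, mul_re, mul_im, one_re, one_im, zero_mul,
    sub_zero, add_zero, zero_add]
  -- `u², v², uv ≤ 1/4` and `re ω ≥ 0` bound `u² + 2uv re ω + v² |ω|²` by `(1 + 2 re ω + |ω|²)/4`
  have hu : u ^ 2 ≤ 1 / 4 := by nlinarith
  have hv : v ^ 2 ≤ 1 / 4 := by nlinarith
  have huv : u * v ≤ 1 / 4 := by nlinarith
  nlinarith [mul_le_mul_of_nonneg_right huv hre,
    mul_le_mul_of_nonneg_right hv (add_nonneg (sq_nonneg ω.re) (sq_nonneg ω.im))]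

namespace IsImagQuadOmega

variable {ω : ℂ}

lemma re_im_cases (hω : IsImagQuadOmega ω) :
    0 < ω.im ∧ (ω.re = 0 ∧ 1 ≤ ω.im ^ 2 ∨ ω.re = 1 / 2 ∧ 3 / 4 ≤ ω.im ^ 2) := by
  obtain ⟨D, hD, hcases⟩ := hω
  have hsq : (√|(D : ℝ)| / 2) ^ 2 = -D / 4 := by
    rw [div_pow, Real.sq_sqrt (abs_nonneg _), abs_of_neg (by exact_mod_cast hD)]
    ring
  have hpos : 0 < √|(D : ℝ)| / 2 := by
    have : (D : ℝ) ≠ 0 := by exact_mod_cast hD.ne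
    positivity
  rcases hcases with ⟨-, -, hD4, rfl⟩ | ⟨-, hD4, rfl⟩
  · have him : (I * √|(D : ℝ)| / 2).im = √|(D : ℝ)| / 2 := by simp
    have : (D : ℝ) ≤ -4 := by exact_mod_cast (by omega : D ≤ -4)
    refine ⟨him ▸ hpos, Or.inl ⟨by simp, ?_⟩⟩
    rw [him, hsq]
    linarith
  · have him : ((1 + I * √|(D : ℝ)|) / 2).im = √|(D : ℝ)| / 2 := by simp
    have : (D : ℝ) ≤ -3 := by exact_mod_cast (by omega : D ≤ -3)
    refine ⟨him ▸ hpos, Or.inr ⟨by simp, ?_⟩⟩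
    rw [him, hsq]
    linarith

lemma exists_conj_eq (hω : IsImagQuadOmega ω) : ∃ m : ℤ, conj ω = m - ω := by
  rcases hω.re_im_cases.2 with ⟨hre, -⟩ | ⟨hre, -⟩
  · exact ⟨0, Complex.ext (by simp [hre]) (by simp)⟩
  · exact ⟨1, Complex.ext (by simp [hre]; norm_num) (by simp)⟩

lemma one_le_norm_int_add_int_mul (hω : IsImagQuadOmega ω) {a b : ℤ}
    (h : (a : ℂ) + b * ω ≠ 0) : 1 ≤ ‖(a : ℂ) + b * ω‖ := by
  have hab : a ≠ 0 ∨ b ≠ 0 := by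
    by_contra! h0
    obtain ⟨rfl, rfl⟩ := h0
    simp at h
  rw [← one_le_sq_iff₀ (norm_nonneg _), Complex.sq_norm, normSq_apply]
  simp only [add_re, add_im, intCast_re, intCast_im, mul_re, mul_im, zero_mul, sub_zero,
    add_zero, zero_add]
  rcases hω.re_im_cases.2 with ⟨hre, him⟩ | ⟨hre, him⟩ <;> rw [hre]
  · have hint : (1 : ℤ) ≤ a ^ 2 + b ^ 2 := by
      rcases hab with hne | hne <;> nlinarith [sq_nonneg a, sq_nonneg b, sq_pos_of_ne_zero hne]
    have : (1 : ℝ) ≤ a ^ 2 + b ^ 2 := by exact_mod_cast hint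
    nlinarith
  · have hint : (1 : ℤ) ≤ a ^ 2 + a * b + b ^ 2 := by
      rcases eq_or_ne b 0 with rfl | hb
      · simpa using Int.one_le_abs (by simpa using hab)
      · nlinarith [sq_nonneg (2 * a + b), sq_pos_of_ne_zero hb]
    have : (1 : ℝ) ≤ a ^ 2 + a * b + b ^ 2 := by exact_mod_cast hint
    nlinarith

variable {O : Subring ℂ}

lemma conj_mem (hω : IsImagQuadOmega ω) (hOω : (O : Set ℂ) = {z | ∃ a b : ℤ, z = a + b * ω})
    {x : ℂ} (hx : x ∈ O) : conj x ∈ O := by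
  obtain ⟨a, b, rfl⟩ := (Set.ext_iff.1 hOω x).1 hx
  obtain ⟨m, hm⟩ := hω.exists_conj_eq
  exact (Set.ext_iff.1 hOω _).2 ⟨a + b * m, -b, by simp [hm]; ring⟩

lemma one_le_norm_of_mem (hω : IsImagQuadOmega ω)
    (hOω : (O : Set ℂ) = {z | ∃ a b : ℤ, z = a + b * ω}) {x : ℂ} (hx : x ∈ O) (h0 : x ≠ 0) :
    1 ≤ ‖x‖ := by
  obtain ⟨a, b, rfl⟩ := (Set.ext_iff.1 hOω x).1 hx
  exact hω.one_le_norm_int_add_int_mul h0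

lemma div_mem_of_norm_eq_one (hω : IsImagQuadOmega ω)
    (hOω : (O : Set ℂ) = {z | ∃ a b : ℤ, z = a + b * ω}) {p q : ℂ} (hp : p ∈ O) (hq : q ∈ O)
    (h : ‖p‖ = 1) : q / p ∈ O := by
  have hp0 : p ≠ 0 := norm_ne_zero_iff.1 (by simp [h])
  have hpp : p * conj p = 1 := by rw [mul_conj, normSq_eq_norm_sq, h]; simp
  rw [div_eq_mul_inv, inv_eq_of_mul_eq_one_right hpp]
  exact O.mul_mem hq (hω.conj_mem hOω hp)

lemma exists_mem_norm_sub_le (hω : IsImagQuadOmega ω)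
    (hOω : (O : Set ℂ) = {z | ∃ a b : ℤ, z = a + b * ω}) (z : ℂ) :
    ∃ q ∈ O, ‖z - q‖ ≤ ‖1 + ω‖ / 2 := by
  obtain ⟨him, hre⟩ := hω.re_im_cases
  have hre_nonneg : 0 ≤ ω.re := by rcases hre with ⟨h, -⟩ | ⟨h, -⟩ <;> simp [h]
  obtain ⟨a, b, hab⟩ := exists_int_norm_sub_le hre_nonneg him.ne' z
  exact ⟨_, (Set.ext_iff.1 hOω _).2 ⟨a, b, rfl⟩, hab⟩

end IsImagQuadOmega

/-- Let `O = ℤ[ω]` be the ring of integers of an imaginary quadratic field and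
`c = min {|z| : z ∈ O, |z| > 1}`. If `s ≥ 2 ln(|1+ω| c / (c-1))`, then for every
`(p,q) ∈ O²` with `p ≠ 0` and every `δ > 0`, the annulus `A(q/p, e^s/δ, e^{s/2}/|p|)` is
contained in the union of the translates `A(q', e^s/δ, e^{s/2})`, `q' ∈ O`; that is, its
projection to `ℂ/O` is contained in the projection of `A(0, e^s/δ, e^{s/2})`. -/
theorem stmt_9 (O : Subring ℂ) (ω : ℂ) (hω : IsImagQuadOmega ω)
    (hOω : (O : Set ℂ) = {z | ∃ a b : ℤ, z = a + b * ω})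
    (c : ℝ) (hc : IsLeast {x : ℝ | ∃ z ∈ O, 1 < ‖z‖ ∧ ‖z‖ = x} c)
    (s : ℝ) (hs : 2 * Real.log (‖1 + ω‖ * c / (c - 1)) ≤ s)
    (p q : ℂ) (hp : p ∈ O) (hq : q ∈ O) (hp0 : p ≠ 0) (δ : ℝ) (hδ : 0 < δ) :
    {w : ℂ | Real.exp s / δ ≤ ‖w - q / p‖ ∧
        ‖w - q / p‖ ≤ Real.exp (s / 2) / ‖p‖} ⊆
      {w : ℂ | ∃ q' ∈ O, Real.exp s / δ ≤ ‖w - q'‖ ∧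
        ‖w - q'‖ ≤ Real.exp (s / 2)} := by
  rintro w ⟨hw_in, hw_out⟩
  rcases (hω.one_le_norm_of_mem hOω hp hp0).eq_or_lt with hp1 | hp1
  · refine ⟨q / p, hω.div_mem_of_norm_eq_one hOω hp hq hp1.symm, hw_in, ?_⟩
    simpa [← hp1] using hw_out
  have hc1 : 1 < c := by
    obtain ⟨z, -, hz1, rfl⟩ := hc.1
    exact hz1
  have hcp : c ≤ ‖p‖ := hc.2 ⟨p, hp, hp1, rfl⟩
  have hA : 0 < ‖1 + ω‖ :=
    norm_pos_iff.2 fun h => hω.re_im_cases.1.ne' (by simpa using congrArg im h)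
  have hR : Real.exp s / δ ≤ Real.exp (s / 2) / c :=
    hw_in.trans (hw_out.trans (div_le_div_of_nonneg_left (Real.exp_pos _).le (by linarith) hcp))
  obtain ⟨q', hq', h_in, h_out⟩ :=
    exists_mem_norm_sub_mem_Icc (hω.exists_mem_norm_sub_le hOω) w
      (by positivity : 0 ≤ Real.exp s / δ)
  exact ⟨q', hq', h_in, by linarith [exp_half_div_add_le hA hc1 hs]⟩
end

section
/- Let K be an imaginary quadratic field with 𝒪 = ℤ[ω] and |ω| = 1 (i.e., K = ℚ(i) or ℚ(i√3)). Under the hypotheses of the preceding tail decomposition (f_s(δ) = 1 for 2 ln|ω| = 0 ≤ s ≤ ln(δ/2) and for s ∈ [s_-, s_+] when δ ≥ 4; f_s(δ) = 0 for s ≥ 2 ln δ), the tail T(δ) = 2∫₀^∞ (1-f_s(δ)) e^{-2s} ds satisfies T(δ) = 1/δ⁴ + O(1/δ⁵) as δ → +∞. -/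
/-!
For large `δ` the roots `A, B = δ/2 ± (δ/2)√(1 - 4/δ)` satisfy `A ≥ δ - 2` and
`0 < B ≤ 2`, so `2 ln B ≤ ln(δ/2)` and the two intervals on which `f_s(δ) = 1`
cover `(0, 2 ln A]`. Hence `1 - f` vanishes on `(0, 2 ln A]` and equals `1` beyond
`2 ln δ`, which squeezes the tail between `∫_{2 ln δ}^∞ 2e^{-2s} ds = δ⁻⁴` and
`∫_{2 ln A}^∞ 2e^{-2s} ds = A⁻⁴ ≤ (δ - 2)⁻⁴ = δ⁻⁴ + O(δ⁻⁵)`.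
-/

open Filter Asymptotics MeasureTheory Set

lemma integral_Ioi_zero_indicator_exp_neg_mul {a c : ℝ} (ha : 0 ≤ a) (hc : 0 < c) :
    ∫ s in Ioi 0, (Ioi a).indicator (fun s => Real.exp (-c * s)) s =
      Real.exp (-c * a) / c := by
  rw [setIntegral_indicator measurableSet_Ioi, Ioi_inter_Ioi, max_eq_right ha,
    integral_exp_mul_Ioi (neg_lt_zero.2 hc), neg_div_neg_eq]

lemma integral_Ioi_zero_mul_exp_neg_le {g : ℝ → ℝ} {a c : ℝ} (ha : 0 ≤ a) (hc : 0 < c)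
    (hg : ∀ s > 0, g s ∈ Icc 0 1) (hg_zero : ∀ s ∈ Ioc 0 a, g s = 0) :
    ∫ s in Ioi 0, g s * Real.exp (-c * s) ≤ Real.exp (-c * a) / c := by
  rw [← integral_Ioi_zero_indicator_exp_neg_mul ha hc]
  refine integral_mono_of_nonneg ?_ ?_ ?_
  · filter_upwards [ae_restrict_mem measurableSet_Ioi] with s hs
    exact mul_nonneg (hg s hs).1 (Real.exp_pos _).le
  · exact (integrable_indicator_iff measurableSet_Ioi).2
      ((exp_neg_integrableOn_Ioi a hc).mono_measure Measure.restrict_le_self)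
  · filter_upwards [ae_restrict_mem measurableSet_Ioi] with s (hs : 0 < s)
    by_cases hsa : s ≤ a
    · rw [hg_zero s ⟨hs, hsa⟩, zero_mul]
      exact indicator_nonneg (fun _ _ => (Real.exp_pos _).le) s
    · rw [indicator_of_mem (show s ∈ Ioi a from not_le.1 hsa)]
      exact mul_le_of_le_one_left (Real.exp_pos _).le (hg s hs).2

lemma le_integral_Ioi_zero_mul_exp_neg {g : ℝ → ℝ} {b c : ℝ} (hg_meas : Measurable g)
    (hb : 0 ≤ b) (hc : 0 < c) (hg : ∀ s > 0, g s ∈ Icc 0 1)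
    (hg_one : ∀ s, b < s → g s = 1) :
    Real.exp (-c * b) / c ≤ ∫ s in Ioi 0, g s * Real.exp (-c * s) := by
  rw [← integral_Ioi_zero_indicator_exp_neg_mul hb hc]
  refine integral_mono_of_nonneg ?_ ?_ ?_
  · exact .of_forall (indicator_nonneg fun _ _ => (Real.exp_pos _).le)
  · refine (exp_neg_integrableOn_Ioi 0 hc).mono' (by fun_prop) ?_
    filter_upwards [ae_restrict_mem measurableSet_Ioi] with s hs
    have hg_abs : |g s| ≤ 1 := abs_le.2 ⟨by linarith [(hg s hs).1], (hg s hs).2⟩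
    rw [norm_mul, Real.norm_of_nonneg (Real.exp_pos _).le]
    exact mul_le_of_le_one_left (Real.exp_pos _).le hg_abs
  · filter_upwards [ae_restrict_mem measurableSet_Ioi] with s (hs : 0 < s)
    by_cases hbs : b < s
    · simp [indicator_of_mem (show s ∈ Ioi b from hbs), hg_one s hbs]
    · rw [indicator_of_notMem (show s ∉ Ioi b from hbs)]
      exact mul_nonneg (hg s hs).1 (Real.exp_pos _).le

lemma sub_two_le_larger_root {δ : ℝ} (hδ : 4 ≤ δ) :
    δ - 2 ≤ δ / 2 + δ / 2 * √(1 - 4 / δ) := by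
  have h4δ : 0 < 4 / δ := by positivity
  have hsqrt : 1 - 4 / δ ≤ √(1 - 4 / δ) := Real.le_sqrt_self_iff.2 (by linarith)
  have : δ / 2 * (1 - 4 / δ) = δ / 2 - 2 := by field_simp; ring
  nlinarith

lemma two_mul_log_smaller_root_le {δ : ℝ} (hδ : 8 ≤ δ) :
    2 * Real.log (δ / 2 - δ / 2 * √(1 - 4 / δ)) ≤ Real.log (δ / 2) := by
  have hsqrt : √(1 - 4 / δ) < 1 :=
    (Real.sqrt_lt' one_pos).2 (by linarith [show 0 < 4 / δ by positivity])
  have hpos : 0 < δ / 2 - δ / 2 * √(1 - 4 / δ) := by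
    rw [← mul_one_sub]; exact mul_pos (by linarith) (by linarith)
  have hle : δ / 2 - δ / 2 * √(1 - 4 / δ) ≤ 2 := by
    linarith [sub_two_le_larger_root (by linarith : (4 : ℝ) ≤ δ)]
  have hlog := Real.log_le_log (pow_pos hpos 2) (show _ ≤ δ / 2 by nlinarith)
  rwa [Real.log_pow, Nat.cast_ofNat] at hlog

lemma one_div_sub_two_pow_four_sub_one_div_pow_four_le {δ : ℝ} (hδ : 8 ≤ δ) :
    1 / (δ - 2) ^ 4 - 1 / δ ^ 4 ≤ 128 * (1 / δ ^ 5) := by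
  have h8 : (0 : ℝ) ≤ δ - 8 := by linarith
  have h2 : (0 : ℝ) < δ - 2 := by linarith
  rw [sub_le_iff_le_add, ← mul_div_assoc, mul_one,
    div_add_div _ _ (by positivity) (by positivity),
    div_le_div_iff₀ (by positivity) (by positivity)]
  nlinarith [pow_nonneg h8 4, pow_nonneg h8 3, pow_nonneg h8 2, pow_pos (by linarith : 0 < δ) 4]

lemma exp_neg_two_mul_two_mul_log {x : ℝ} (hx : 0 < x) :
    Real.exp (-2 * (2 * Real.log x)) = 1 / x ^ 4 := by
  rw [show -2 * (2 * Real.log x) = -Real.log (x ^ 4) by rw [Real.log_pow]; push_cast; ring,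
    Real.exp_neg, Real.exp_log (by positivity), one_div]

/-- Heavy-tail estimate in the Gaussian/Eisenstein cases (`|ω| = 1`, so `2 ln|ω| = 0`):
under the hypotheses of the tail decomposition (`f_s(δ) = 1` for `0 ≤ s ≤ ln(δ/2)` and for
`s ∈ [s_-, s_+]` when `δ ≥ 4`, where `s_± = 2 ln(δ/2 ± (δ/2)√(1-4/δ))`; `f_s(δ) = 0` for
`s ≥ 2 ln δ`), the tail `T(δ) = 2 ∫₀^∞ (1 - f_s(δ)) e^{-2s} ds` satisfies
`T(δ) = 1/δ⁴ + O(1/δ⁵)` as `δ → +∞`. -/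
theorem stmt_19 (f : ℝ → ℝ → ℝ) (hmeas : Measurable (Function.uncurry f))
    (hrange : ∀ s δ : ℝ, 0 < s → 0 < δ → f s δ ∈ Set.Icc (0 : ℝ) 1)
    (h1 : ∀ δ : ℝ, 4 ≤ δ → ∀ s : ℝ,
      2 * Real.log (δ / 2 - δ / 2 * Real.sqrt (1 - 4 / δ)) ≤ s →
      s ≤ 2 * Real.log (δ / 2 + δ / 2 * Real.sqrt (1 - 4 / δ)) → f s δ = 1)
    (h2 : ∀ s δ : ℝ, 0 ≤ s → s ≤ Real.log (δ / 2) → f s δ = 1)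
    (h3 : ∀ s δ : ℝ, 0 < δ → 2 * Real.log δ ≤ s → f s δ = 0) :
    (fun δ : ℝ =>
        (2 * ∫ s in Set.Ioi (0 : ℝ), (1 - f s δ) * Real.exp (-2 * s)) - 1 / δ ^ 4)
      =O[atTop] fun δ : ℝ => 1 / δ ^ 5 := by
  refine isBigO_iff.2 ⟨128, ?_⟩
  filter_upwards [eventually_ge_atTop (8 : ℝ)] with δ hδ
  have hδ_pos : 0 < δ := by linarith
  set A := δ / 2 + δ / 2 * √(1 - 4 / δ)
  have hA : δ - 2 ≤ A := sub_two_le_larger_root (by linarith)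
  have hg : ∀ s > 0, 1 - f s δ ∈ Icc 0 1 := fun s hs => by
    obtain ⟨hf0, hf1⟩ := hrange s δ hs hδ_pos
    constructor <;> linarith
  have hg_zero : ∀ s ∈ Ioc 0 (2 * Real.log A), 1 - f s δ = 0 := by
    rintro s ⟨hs, hsA⟩
    rcases le_or_gt s (Real.log (δ / 2)) with hs_small | hs_large
    · rw [h2 s δ hs.le hs_small, sub_self]
    · rw [h1 δ (by linarith) s ((two_mul_log_smaller_root_le hδ).trans hs_large.le) hsA,
        sub_self]
  have hupper := integral_Ioi_zero_mul_exp_neg_le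
    (by linarith [Real.log_nonneg (by linarith : 1 ≤ A)]) two_pos hg hg_zero
  have hlower := le_integral_Ioi_zero_mul_exp_neg (g := fun s => 1 - f s δ)
    (b := 2 * Real.log δ)
    ((hmeas.comp measurable_prodMk_right).const_sub 1)
    (by linarith [Real.log_nonneg (by linarith : 1 ≤ δ)]) two_pos hg
    (fun s hs => by rw [h3 s δ hδ_pos hs.le, sub_zero])
  rw [exp_neg_two_mul_two_mul_log (by linarith : 0 < A)] at hupper
  rw [exp_neg_two_mul_two_mul_log hδ_pos] at hlower
  have hA_pow : 1 / A ^ 4 ≤ 1 / (δ - 2) ^ 4 :=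
    one_div_le_one_div_of_le (pow_pos (by linarith) 4) (pow_le_pow_left₀ (by linarith) hA 4)
  rw [Real.norm_of_nonneg (by linarith), Real.norm_of_nonneg (by positivity)]
  linarith [one_div_sub_two_pow_four_sub_one_div_pow_four_le hδ]
end
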